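/- Let k > s be positive integers and let A_{k,s} be the associated k×k transfer matrix. Then for every positive integer n, the number of extreme points of P_{n,k,s} equals the sum of all entries of the (n−1)-st power of A_{k,s}: b_n^{(k,s)} = ∑_{a=0}^{k−1} ∑_{b=0}^{k−1} (A_{k,s}^{n−1})_{a,b}. -/

import Mathlib

open Pointwise

/-- The window `λ_i = {s·i, …, s·i+k−1}` simplex-sum polytope
`P_{n,k,s} = Δ_{λ_0} + ⋯ + Δ_{λ_{n-1}} ⊆ ℝ^K`, `K = s(n−1)+k`. -/
noncomputable def poolPolytope (n k s : ℕ) : Set (Fin (s * (n - 1) + k) → ℝ) :=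
  ∑ i ∈ Finset.range n,
    convexHull ℝ {v : Fin (s * (n - 1) + k) → ℝ |
      ∃ j : Fin (s * (n - 1) + k), s * i ≤ (j : ℕ) ∧ (j : ℕ) < s * i + k ∧
        v = Pi.single j (1 : ℝ)}

/-- `b_n^{(k,s)}`, the number of vertices (extreme points) of `P_{n,k,s}`. -/
noncomputable def numVertices (n k s : ℕ) : ℕ :=
  Nat.card (Set.extremePoints ℝ (poolPolytope n k s))

/-- The transfer matrix `A_{k,s}`: the `(a,b)` entry is `0` if `a ≥ s`, `b ≤ k−s−1` and
`a ≠ b+s`, and `1` otherwise. -/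
def transferMatrix (k s : ℕ) : Matrix (Fin k) (Fin k) ℚ :=
  Matrix.of fun a b =>
    if s ≤ (a : ℕ) ∧ (b : ℕ) ≤ k - s - 1 ∧ (a : ℕ) ≠ (b : ℕ) + s then 0 else 1

namespace PoolAux

open Finset

variable (k s n : ℕ)

def okp (x y : Fin k) : Prop :=
  ¬(s ≤ (x : ℕ) ∧ (y : ℕ) ≤ k - s - 1 ∧ (x : ℕ) ≠ (y : ℕ) + s)

instance (x y : Fin k) : Decidable (okp k s x y) := by unfold okp; infer_instance

def IsWalkM (m : ℕ) (a : Fin m → Fin k) : Prop :=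
  ∀ i : ℕ, (h : i + 1 < m) → okp k s (a ⟨i, by omega⟩) (a ⟨i + 1, h⟩)

noncomputable def walkSet (m : ℕ) : Finset (Fin m → Fin k) :=
  @Finset.filter _ (IsWalkM k s m) (Classical.decPred _) Finset.univ

lemma mem_walkSet {m : ℕ} (a : Fin m → Fin k) :
    a ∈ walkSet k s m ↔ IsWalkM k s m a := by
  simp [walkSet]

lemma transfer_eq (x y : Fin k) :
    transferMatrix k s x y = if okp k s x y then 1 else 0 := by
  by_cases h : s ≤ (x : ℕ) ∧ (y : ℕ) ≤ k - s - 1 ∧ (x : ℕ) ≠ (y : ℕ) + s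
  · simp [transferMatrix, okp, h]
  · simp [transferMatrix, okp, h]

/-- walks of length m+1 ending at y -/
noncomputable def lastCount (m : ℕ) (y : Fin k) : ℕ :=
  (@Finset.filter _ (fun a => a ⟨m, Nat.lt_succ_self m⟩ = y) (Classical.decPred _)
    (walkSet k s (m + 1))).card

lemma lastCount_zero (y : Fin k) : lastCount k s 0 y = 1 := by
  classical
  rw [lastCount]
  convert Finset.card_singleton (fun _ : Fin 1 => y) using 2
  ext a
  simp only [Finset.mem_filter, mem_walkSet, Finset.mem_singleton]
  constructor
  · rintro ⟨_, h⟩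
    funext i
    have h2 := i.2
    have : i = ⟨0, Nat.one_pos⟩ := Fin.ext (by omega)
    rw [this]
    exact h
  · rintro rfl
    exact ⟨fun i h => absurd h (by omega), rfl⟩

lemma lastCount_succ (m : ℕ) (y : Fin k) :
    lastCount k s (m + 1) y =
      ∑ z : Fin k, if okp k s z y then lastCount k s m z else 0 := by
  classical
  rw [lastCount]
  rw [Finset.card_eq_sum_card_fiberwise
    (f := fun a : Fin (m + 2) → Fin k => a ⟨m, by omega⟩) (t := Finset.univ)
    (fun a _ => Finset.mem_univ _)]
  refine Finset.sum_congr rfl fun z _ => ?_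
  by_cases hok : okp k s z y
  · rw [if_pos hok, lastCount]
    refine Finset.card_bij'
      (i := fun a _ => fun i : Fin (m + 1) => a ⟨i.1, by omega⟩)
      (j := fun b _ => fun i : Fin (m + 2) => if h : i.1 < m + 1 then b ⟨i.1, h⟩ else y)
      ?_ ?_ ?_ ?_
    · intro a ha
      simp only [Finset.mem_filter, mem_walkSet] at ha ⊢
      obtain ⟨⟨ha1, hlast⟩, hpen⟩ := ha
      refine ⟨fun i h => ?_, ?_⟩
      · exact ha1 i (by omega)
      · exact hpen
    · intro b hb
      simp only [Finset.mem_filter, mem_walkSet] at hb ⊢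
      obtain ⟨hb1, hblast⟩ := hb
      refine ⟨⟨fun i h => ?_, ?_⟩, ?_⟩
      · by_cases h2 : i + 1 < m + 1
        · simp only [dif_pos (show i < m + 1 by omega), dif_pos h2]
          exact hb1 i h2
        · simp only [dif_pos (show i < m + 1 by omega), dif_neg h2]
          have he : (⟨i, show i < m + 1 by omega⟩ : Fin (m + 1)) = ⟨m, by omega⟩ :=
            Fin.ext (by simp only []; omega)
          rw [he, hblast]
          exact hok
      · simp only [dif_neg (show ¬ m + 1 < m + 1 by omega)]
      · simp only [dif_pos (show m < m + 1 by omega)]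
        exact hblast
    · intro a ha
      simp only [Finset.mem_filter, mem_walkSet] at ha
      funext i
      by_cases h : i.1 < m + 1
      · simp only [dif_pos h]
      · have h2 := i.2
        have he : i = (⟨m + 1, by omega⟩ : Fin (m + 2)) := by
          apply Fin.ext; simp only []; omega
        simp only [dif_neg h]
        rw [he]
        exact (ha.1.2).symm
    · intro b hb
      funext i
      simp only [dif_pos i.2]
  · rw [if_neg hok]
    rw [Finset.card_eq_zero]
    rw [Finset.eq_empty_iff_forall_notMem]
    intro a ha
    simp only [Finset.mem_filter, mem_walkSet] at ha
    obtain ⟨⟨hw, hlast⟩, hpen⟩ := ha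
    apply hok
    have := hw m (by omega)
    rwa [hpen, hlast] at this


lemma lastCount_eq (m : ℕ) (y : Fin k) :
    (lastCount k s m y : ℚ) = ∑ x : Fin k, (transferMatrix k s ^ m) x y := by
  induction m generalizing y with
  | zero =>
      rw [lastCount_zero, pow_zero]
      simp [Matrix.one_apply]
  | succ m ih =>
      rw [lastCount_succ k s m y]
      rw [Nat.cast_sum]
      have step1 : ∀ z : Fin k,
          ((if okp k s z y then lastCount k s m z else 0 : ℕ) : ℚ)
            = (lastCount k s m z : ℚ) * transferMatrix k s z y := by
        intro z
        rw [transfer_eq]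
        by_cases h : okp k s z y
        · simp [h]
        · simp [h]
      rw [Finset.sum_congr rfl fun z _ => step1 z]
      have step2 : ∀ z : Fin k, (lastCount k s m z : ℚ) * transferMatrix k s z y
          = ∑ x : Fin k, (transferMatrix k s ^ m) x z * transferMatrix k s z y := by
        intro z
        rw [ih z, Finset.sum_mul]
      rw [Finset.sum_congr rfl fun z _ => step2 z]
      rw [Finset.sum_comm]
      refine Finset.sum_congr rfl fun x _ => ?_
      rw [pow_succ, Matrix.mul_apply]

lemma card_walkSet_eq (m : ℕ) :
    ((walkSet k s (m + 1)).card : ℚ)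
      = ∑ x : Fin k, ∑ y : Fin k, (transferMatrix k s ^ m) x y := by
  classical
  have hfib : (walkSet k s (m + 1)).card = ∑ y : Fin k, lastCount k s m y := by
    rw [Finset.card_eq_sum_card_fiberwise
      (f := fun a : Fin (m + 1) → Fin k => a ⟨m, Nat.lt_succ_self m⟩) (t := Finset.univ)
      (fun a _ => Finset.mem_univ _)]
    refine Finset.sum_congr rfl fun y _ => ?_
    rw [lastCount]
    exact congrArg Finset.card (Finset.filter_congr_decidable _ _ _).symm
  rw [hfib, Nat.cast_sum]
  rw [Finset.sum_congr rfl fun y _ => lastCount_eq k s m y]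
  rw [Finset.sum_comm]

def Egen (i : ℕ) : Set (Fin (s * (n - 1) + k) → ℝ) :=
  {v | ∃ j : Fin (s * (n - 1) + k), s * i ≤ (j : ℕ) ∧ (j : ℕ) < s * i + k ∧
    v = Pi.single j (1 : ℝ)}

def Sgen (i : ℕ) : Set (Fin (s * (n - 1) + k) → ℝ) :=
  {y | (∀ c, 0 ≤ y c) ∧ (∀ c : Fin (s * (n - 1) + k), ((c : ℕ) < s * i ∨ s * i + k ≤ (c : ℕ)) → y c = 0)
    ∧ ∑ c, y c = 1}

lemma pool_eq : poolPolytope n k s = ∑ i ∈ Finset.range n, convexHull ℝ (Egen k s n i) := rfl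

lemma convex_Sgen (i : ℕ) : Convex ℝ (Sgen k s n i) := by
  rintro u hu v hv a b ha hb hab
  obtain ⟨hu1, hu2, hu3⟩ := hu
  obtain ⟨hv1, hv2, hv3⟩ := hv
  refine ⟨fun c => add_nonneg (mul_nonneg ha (hu1 c)) (mul_nonneg hb (hv1 c)),
    fun c hc => by simp [Pi.add_apply, hu2 c hc, hv2 c hc], ?_⟩
  simp only [Pi.add_apply, Pi.smul_apply, smul_eq_mul]
  rw [Finset.sum_add_distrib, ← Finset.mul_sum, ← Finset.mul_sum, hu3, hv3]
  linarith

lemma Egen_subset_Sgen (i : ℕ) : Egen k s n i ⊆ Sgen k s n i := by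
  rintro v ⟨j, hj1, hj2, rfl⟩
  refine ⟨fun c => ?_, fun c hc => ?_, ?_⟩
  · rcases eq_or_ne c j with rfl | h
    · simp
    · simp [Pi.single_apply, h]
  · have : c ≠ j := by
      intro h; subst h; omega
    simp [Pi.single_apply, this]
  · simp

lemma hull_subset_Sgen (i : ℕ) : convexHull ℝ (Egen k s n i) ⊆ Sgen k s n i :=
  convexHull_min (Egen_subset_Sgen k s n i) (convex_Sgen k s n i)

lemma mem_pool (x : Fin (s * (n - 1) + k) → ℝ) :
    x ∈ poolPolytope n k s ↔
      ∃ y : ℕ → (Fin (s * (n - 1) + k) → ℝ),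
        (∀ i ∈ Finset.range n, y i ∈ convexHull ℝ (Egen k s n i)) ∧
        ∑ i ∈ Finset.range n, y i = x := by
  rw [pool_eq, Set.mem_finset_sum]
  constructor
  · rintro ⟨g, hg, hgx⟩
    exact ⟨g, fun i hi => hg hi, hgx⟩
  · rintro ⟨y, hy, hyx⟩
    exact ⟨y, fun {i} hi => hy i hi, hyx⟩

/-- the coordinate `s*i + b` as an element of `Fin (s*(n-1)+k)` -/
def fj (i : ℕ) (hi : i < n) (b : Fin k) : Fin (s * (n - 1) + k) :=
  ⟨s * i + (b : ℕ), by
    have hb := b.2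
    have h1 : s * i ≤ s * (n - 1) := Nat.mul_le_mul_left s (by omega)
    omega⟩

def vert (a : Fin n → Fin k) : Fin (s * (n - 1) + k) → ℝ :=
  ∑ i : Fin n, Pi.single (fj k s n i.1 i.2 (a i)) (1 : ℝ)

def ycan (a : Fin n → Fin k) : ℕ → (Fin (s * (n - 1) + k) → ℝ) :=
  fun i => if h : i < n then Pi.single (fj k s n i h (a ⟨i, h⟩)) (1 : ℝ) else 0

lemma sum_ycan (a : Fin n → Fin k) :
    ∑ i ∈ Finset.range n, ycan k s n a i = vert k s n a := by
  rw [← Fin.sum_univ_eq_sum_range (fun i => ycan k s n a i) n]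
  refine Finset.sum_congr rfl fun i _ => ?_
  simp only [ycan, dif_pos i.2]

lemma single_mem_hull {i : ℕ} (hi : i < n) (b : Fin k) :
    Pi.single (fj k s n i hi b) (1 : ℝ) ∈ convexHull ℝ (Egen k s n i) := by
  apply subset_convexHull
  refine ⟨fj k s n i hi b, ?_, ?_, rfl⟩
  · exact Nat.le_add_right _ _
  · exact Nat.add_lt_add_left b.2 _

lemma ycan_mem (a : Fin n → Fin k) :
    ∀ i ∈ Finset.range n, ycan k s n a i ∈ convexHull ℝ (Egen k s n i) := by
  intro i hi
  rw [Finset.mem_range] at hi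
  simp only [ycan, dif_pos hi]
  exact single_mem_hull k s n hi _

lemma vert_mem_pool (a : Fin n → Fin k) : vert k s n a ∈ poolPolytope n k s :=
  (mem_pool k s n _).2 ⟨ycan k s n a, ycan_mem k s n a, sum_ycan k s n a⟩

lemma single_injective {K : ℕ} {u v : Fin K} (h : (Pi.single u 1 : Fin K → ℝ) = Pi.single v 1) : u = v := by
  by_contra hne
  have := congrFun h u
  rw [Pi.single_eq_same, Pi.single_apply, if_neg hne] at this
  exact one_ne_zero this

lemma extreme_sub (hks : s < k) (x : Fin (s * (n - 1) + k) → ℝ)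
    (hx : x ∈ Set.extremePoints ℝ (poolPolytope n k s)) :
    ∃ a : Fin n → Fin k, IsWalkM k s n a ∧ x = vert k s n a := by
  obtain ⟨hxP, hext⟩ := hx
  obtain ⟨y, hy, hyx⟩ := (mem_pool k s n x).1 hxP
  -- each component is an extreme point of its simplex, hence a vertex
  have hyE : ∀ i ∈ Finset.range n, y i ∈ Egen k s n i := by
    intro i hi
    apply extremePoints_convexHull_subset (𝕜 := ℝ)
    refine ⟨hy i hi, ?_⟩
    intro u hu v hv hseg
    obtain ⟨t1, t2, ht1, ht2, ht12, hteq⟩ := hseg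
    have hP : ∀ w, w ∈ convexHull ℝ (Egen k s n i) → x - y i + w ∈ poolPolytope n k s := by
      intro w hw
      apply (mem_pool k s n _).2
      classical
      refine ⟨Function.update y i w, ?_, ?_⟩
      · intro j hj
        rcases eq_or_ne j i with rfl | hne
        · rwa [Function.update_self]
        · rw [Function.update_of_ne hne]; exact hy j hj
      · rw [Finset.sum_update_of_mem hi, ← hyx,
          Finset.sum_eq_sum_sdiff_singleton_add hi (fun j => y j)]
        abel
    have hxseg : x ∈ openSegment ℝ (x - y i + u) (x - y i + v) := by
      refine ⟨t1, t2, ht1, ht2, ht12, ?_⟩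
      have : t1 • (x - y i + u) + t2 • (x - y i + v)
          = (t1 + t2) • (x - y i) + (t1 • u + t2 • v) := by module
      rw [this, hteq, ht12, one_smul]
      abel
    obtain ⟨h1, h2⟩ := (mem_extremePoints.1 ⟨hxP, hext⟩).2 _ (hP u hu) _ (hP v hv) hxseg
    have hx' : x - y i + y i = x := by abel
    exact add_left_cancel (h1.trans hx'.symm)
  -- extract the indices
  choose jf hjf1 hjf2 hjf3 using hyE
  have hmem : ∀ i : Fin n, i.1 ∈ Finset.range n := fun i => Finset.mem_range.2 i.2
  set a : Fin n → Fin k := fun i =>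
    ⟨(jf i.1 (hmem i) : ℕ) - s * i.1, by
      have h1 := hjf1 i.1 (hmem i); have h2 := hjf2 i.1 (hmem i); omega⟩ with ha
  have hfj : ∀ i : Fin n, fj k s n i.1 i.2 (a i) = jf i.1 (hmem i) := by
    intro i
    apply Fin.ext
    simp only [fj, ha]
    have h1 := hjf1 i.1 (hmem i)
    omega
  have hxv : x = vert k s n a := by
    rw [← hyx, ← Fin.sum_univ_eq_sum_range (fun i => y i) n, vert]
    refine Finset.sum_congr rfl fun i _ => ?_
    rw [hjf3 i.1 (hmem i), hfj i]
  refine ⟨a, ?_, hxv⟩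
  -- walk condition
  intro i hi1
  by_contra hbad
  rw [okp, not_not] at hbad
  obtain ⟨hb1, hb2, hb3⟩ := hbad
  set i0 : Fin n := ⟨i, by omega⟩
  set i1 : Fin n := ⟨i + 1, hi1⟩
  set u : Fin (s * (n - 1) + k) := fj k s n i (by omega) (a i0)
  set v : Fin (s * (n - 1) + k) := fj k s n (i + 1) hi1 (a i1)
  have hyi0 : y i = Pi.single u (1:ℝ) := by
    rw [hjf3 i (Finset.mem_range.2 (by omega))]
    congr 1
    rw [show jf i (Finset.mem_range.2 (by omega : i < n)) = jf i0.1 (hmem i0) from rfl,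
      ← hfj i0]
  have hyi1 : y (i + 1) = Pi.single v (1:ℝ) := by
    rw [hjf3 (i+1) (Finset.mem_range.2 hi1)]
    congr 1
    rw [show jf (i+1) (Finset.mem_range.2 hi1) = jf i1.1 (hmem i1) from rfl, ← hfj i1]
  -- the two swapped points
  have hvmem : Pi.single v (1:ℝ) ∈ convexHull ℝ (Egen k s n i) := by
    apply subset_convexHull
    refine ⟨v, ?_, ?_, rfl⟩
    · show s * i ≤ s * (i+1) + ((a i1 : ℕ))
      have := Nat.mul_le_mul_left s (show i ≤ i + 1 by omega)
      omega
    · show s * (i+1) + ((a i1 : ℕ)) < s * i + k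
      have : s * (i+1) = s * i + s := by ring
      omega
  have humem : Pi.single u (1:ℝ) ∈ convexHull ℝ (Egen k s n (i + 1)) := by
    apply subset_convexHull
    refine ⟨u, ?_, ?_, rfl⟩
    · show s * (i+1) ≤ s * i + ((a i0 : ℕ))
      have : s * (i+1) = s * i + s := by ring
      omega
    · show s * i + ((a i0 : ℕ)) < s * (i+1) + k
      have := (a i0).2
      have : s * i ≤ s * (i+1) := Nat.mul_le_mul_left s (by omega)
      omega

  classical
  have hpP : x - Pi.single u (1:ℝ) + Pi.single v 1 ∈ poolPolytope n k s := by
    apply (mem_pool k s n _).2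
    refine ⟨Function.update y i (Pi.single v 1), ?_, ?_⟩
    · intro j hj
      rcases eq_or_ne j i with rfl | hne
      · rwa [Function.update_self]
      · rw [Function.update_of_ne hne]; exact hy j hj
    · rw [Finset.sum_update_of_mem (Finset.mem_range.2 (by omega : i < n)), ← hyx,
        Finset.sum_eq_sum_sdiff_singleton_add (Finset.mem_range.2 (by omega : i < n)) (fun j => y j),
        hyi0]
      abel
  have hqP : x + Pi.single u (1:ℝ) - Pi.single v 1 ∈ poolPolytope n k s := by
    apply (mem_pool k s n _).2
    refine ⟨Function.update y (i+1) (Pi.single u 1), ?_, ?_⟩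
    · intro j hj
      rcases eq_or_ne j (i+1) with rfl | hne
      · rwa [Function.update_self]
      · rw [Function.update_of_ne hne]; exact hy j hj
    · rw [Finset.sum_update_of_mem (Finset.mem_range.2 hi1), ← hyx,
        Finset.sum_eq_sum_sdiff_singleton_add (Finset.mem_range.2 hi1) (fun j => y j),
        hyi1]
      abel
  have hseg : x ∈ openSegment ℝ (x - Pi.single u (1:ℝ) + Pi.single v 1)
      (x + Pi.single u (1:ℝ) - Pi.single v 1) := by
    refine ⟨1/2, 1/2, by norm_num, by norm_num, by norm_num, ?_⟩
    module
  obtain ⟨h1, _⟩ := (mem_extremePoints.1 ⟨hxP, hext⟩).2 _ hpP _ hqP hseg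
  have huv : (Pi.single v 1 : Fin (s * (n - 1) + k) → ℝ) = Pi.single u 1 := by
    have hz : x - Pi.single u (1:ℝ) + Pi.single v 1 - x = 0 := by rw [h1]; abel
    have h2 : (Pi.single v 1 : Fin (s * (n - 1) + k) → ℝ) - Pi.single u 1 = 0 := by
      rw [← hz]; abel
    exact sub_eq_zero.1 h2
  have := single_injective (K := s*(n-1)+k) huv
  have hval : s * (i+1) + (a i1 : ℕ) = s * i + (a i0 : ℕ) := congrArg Fin.val this
  have hrs : s * (i+1) = s * i + s := by ring
  omega

section Unique

variable {k s n : ℕ}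

/-- the `a`-value at position `i`, as a total function -/
def avD (a : Fin n → Fin k) (i : ℕ) : ℕ := if h : i < n then (a ⟨i, h⟩ : ℕ) else 0

/-- the chosen absolute coordinate at window `i` -/
def jvD (s : ℕ) (a : Fin n → Fin k) (i : ℕ) : ℕ := s * i + avD a i

lemma avD_lt {a : Fin n → Fin k} {i : ℕ} (h : i < n) : avD a i < k := by
  rw [avD, dif_pos h]; exact (a _).2

lemma walk_step {a : Fin n → Fin k} (ha : IsWalkM k s n a) (i : ℕ) (h : i + 1 < n) :
    avD a i < s ∨ k ≤ avD a (i + 1) + s ∨ avD a i = avD a (i + 1) + s := by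
  have hw := ha i h
  rw [okp] at hw
  have h1 : avD a i = (a ⟨i, by omega⟩ : ℕ) := dif_pos (by omega : i < n)
  have h2 : avD a (i + 1) = (a ⟨i + 1, h⟩ : ℕ) := dif_pos h
  rw [h1, h2]
  omega

lemma jv_step_mono {a : Fin n → Fin k} (ha : IsWalkM k s n a) (i : ℕ) (h : i + 1 < n) :
    jvD s a i ≤ jvD s a (i + 1) := by
  have hk := avD_lt (a := a) (show i < n by omega)
  have hr : s * (i + 1) = s * i + s := by ring
  rcases walk_step ha i h with h1 | h1 | h1 <;> (rw [jvD, jvD]; omega)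

lemma jv_mono {a : Fin n → Fin k} (ha : IsWalkM k s n a) {i i' : ℕ} (h : i ≤ i')
    (h' : i' < n) : jvD s a i ≤ jvD s a i' := by
  induction i' with
  | zero =>
    have : i = 0 := by omega
    rw [this]
  | succ m ih =>
    rcases Nat.lt_or_ge i (m + 1) with hlt | hge
    · exact le_trans (ih (by omega) (by omega)) (jv_step_mono ha m h')
    · have : i = m + 1 := by omega
      rw [this]

lemma jv_jump {a : Fin n → Fin k} (ha : IsWalkM k s n a) (q : ℕ) (h : q + 1 < n)
    (hge : s ≤ avD a q) (hne : jvD s a (q + 1) ≠ jvD s a q) : s * q + k ≤ jvD s a (q + 1) := by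
  have hr : s * (q + 1) = s * q + s := by ring
  rcases walk_step ha q h with h1 | h1 | h1
  · omega
  · rw [jvD]; omega
  · exfalso; apply hne; rw [jvD, jvD]; omega

lemma unique_decomp (hs : 0 < s) (hks : s < k) (a : Fin n → Fin k) (ha : IsWalkM k s n a)
    (y : ℕ → Fin (s * (n - 1) + k) → ℝ)
    (hy : ∀ i ∈ Finset.range n, y i ∈ Sgen k s n i)
    (hsum : ∑ i ∈ Finset.range n, y i = vert k s n a) :
    ∀ p (hp : p < n), y p = Pi.single (fj k s n p hp (a ⟨p, hp⟩)) 1 := by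
  classical
  have hnn : ∀ i, i < n → ∀ c, 0 ≤ y i c := fun i hi => (hy i (Finset.mem_range.2 hi)).1
  have hzero : ∀ i, i < n → ∀ c : Fin (s * (n - 1) + k),
      ((c : ℕ) < s * i ∨ s * i + k ≤ (c : ℕ)) → y i c = 0 :=
    fun i hi => (hy i (Finset.mem_range.2 hi)).2.1
  have hmass : ∀ i, i < n → ∑ c, y i c = 1 := fun i hi => (hy i (Finset.mem_range.2 hi)).2.2
  have hle1 : ∀ i, i < n → ∀ c, y i c ≤ 1 := by
    intro i hi c
    rw [← hmass i hi]
    exact Finset.single_le_sum (fun c' _ => hnn i hi c') (Finset.mem_univ c)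
  -- bound for jv
  have hjlt : ∀ i, i < n → jvD s a i < s * (n - 1) + k := by
    intro i hi
    have h1 : s * i ≤ s * (n - 1) := Nat.mul_le_mul_left s (by omega)
    have h2 := avD_lt (a := a) hi
    rw [jvD]; omega
  -- column sums
  have hcol : ∀ c : Fin (s * (n - 1) + k),
      ∑ i ∈ Finset.range n, y i c
        = ∑ i ∈ Finset.range n, (if (c : ℕ) = jvD s a i then (1:ℝ) else 0) := by
    intro c
    have h1 := congrFun hsum c
    rw [Finset.sum_apply] at h1
    rw [h1, vert, Finset.sum_apply]
    rw [← Fin.sum_univ_eq_sum_range (fun i => if (c : ℕ) = jvD s a i then (1:ℝ) else 0) n]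
    refine Finset.sum_congr rfl fun i _ => ?_
    rw [Pi.single_apply]
    congr 1
    rw [Fin.ext_iff]
    simp only [fj, jvD, avD, dif_pos i.2]
  -- the column resolution lemma
  have col : ∀ c : Fin (s * (n - 1) + k),
      (∀ i, i < n → jvD s a i ≠ (c : ℕ) → y i c = 0) →
      ∀ i, i < n → jvD s a i = (c : ℕ) → y i = Pi.single c 1 := by
    intro c h0
    set T := (Finset.range n).filter (fun i => jvD s a i = (c : ℕ)) with hTdef
    have hRHS : ∑ i ∈ Finset.range n, (if (c : ℕ) = jvD s a i then (1:ℝ) else 0)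
        = (T.card : ℝ) := by
      rw [← Finset.sum_boole]
      refine Finset.sum_congr rfl fun i _ => ?_
      by_cases h : jvD s a i = (c : ℕ)
      · rw [if_pos h.symm, if_pos h]
      · rw [if_neg (Ne.symm h), if_neg h]
    have hLHS : ∑ i ∈ Finset.range n, y i c = ∑ i ∈ T, y i c := by
      rw [← Finset.sum_filter_add_sum_filter_not (Finset.range n)
        (fun i => jvD s a i = (c : ℕ)) (fun i => y i c)]
      have : ∑ i ∈ (Finset.range n).filter (fun i => ¬ jvD s a i = (c : ℕ)), y i c = 0 := by
        refine Finset.sum_eq_zero fun i hi => ?_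
        rw [Finset.mem_filter, Finset.mem_range] at hi
        exact h0 i hi.1 hi.2
      rw [this, add_zero]
    have hkey : ∑ i ∈ T, y i c = (T.card : ℝ) := by
      rw [← hLHS, hcol c, hRHS]
    have hall : ∀ i ∈ T, y i c = 1 := by
      by_contra hcon
      push_neg at hcon
      obtain ⟨i0, hi0, hi0ne⟩ := hcon
      have hi0n : i0 < n := Finset.mem_range.1 (Finset.mem_filter.1 hi0).1
      have hlt : ∑ i ∈ T, y i c < ∑ i ∈ T, (1:ℝ) := by
        refine Finset.sum_lt_sum (fun i hi => hle1 i (Finset.mem_range.1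
          (Finset.mem_filter.1 hi).1) c) ⟨i0, hi0, ?_⟩
        exact lt_of_le_of_ne (hle1 i0 hi0n c) hi0ne
      rw [hkey, Finset.sum_const, nsmul_eq_mul, mul_one] at hlt
      exact lt_irrefl _ hlt
    intro i hi hic
    have h1 : y i c = 1 := hall i (Finset.mem_filter.2 ⟨Finset.mem_range.2 hi, hic⟩)
    funext c'
    by_cases hc' : c' = c
    · subst hc'; rw [Pi.single_eq_same]; exact h1
    · rw [Pi.single_apply, if_neg hc']
      have hms := hmass i hi
      have hsp := Finset.add_sum_erase Finset.univ (y i) (Finset.mem_univ c)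
      have hrest : ∑ c'' ∈ Finset.univ.erase c, y i c'' = 0 := by
        rw [hms] at hsp
        rw [h1] at hsp
        linarith
      have := (Finset.sum_eq_zero_iff_of_nonneg
        (fun c'' _ => hnn i hi c'')).1 hrest c' (Finset.mem_erase.2 ⟨hc', Finset.mem_univ c'⟩)
      exact this
  -- Lemma A : downward resolution after a jump
  have lemA : ∀ m p, n ≤ p + m → 1 ≤ p → p < n → s * (p - 1) + k ≤ jvD s a p →
      ∀ t, p ≤ t → t < n → ∀ c : Fin (s * (n - 1) + k), (c : ℕ) < jvD s a p → y t c = 0 := by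
    intro m
    induction m with
    | zero => intro p h1 _ h3 _; omega
    | succ m ih =>
      intro p hnm hp1 hpn hjp
      have hTne : ((Finset.range n).filter (fun t => jvD s a t = jvD s a p)).Nonempty :=
        ⟨p, Finset.mem_filter.2 ⟨Finset.mem_range.2 hpn, rfl⟩⟩
      obtain ⟨q, hqn, hjq, hpq, hmaxq⟩ :
          ∃ q, q < n ∧ jvD s a q = jvD s a p ∧ p ≤ q ∧
            (∀ t, t < n → jvD s a t = jvD s a p → t ≤ q) := by
        refine ⟨((Finset.range n).filter (fun t => jvD s a t = jvD s a p)).max' hTne,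
          ?_, ?_, ?_, ?_⟩
        · exact Finset.mem_range.1 (Finset.mem_filter.1 (Finset.max'_mem _ hTne)).1
        · exact (Finset.mem_filter.1 (Finset.max'_mem _ hTne)).2
        · exact Finset.le_max' ((Finset.range n).filter (fun t => jvD s a t = jvD s a p)) p
            (Finset.mem_filter.2 ⟨Finset.mem_range.2 hpn, rfl⟩)
        · exact fun t ht hjt =>
            Finset.le_max' ((Finset.range n).filter (fun t => jvD s a t = jvD s a p)) t
              (Finset.mem_filter.2 ⟨Finset.mem_range.2 ht, hjt⟩)
      have hcfb : jvD s a p < s * (n - 1) + k := hjlt p hpn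
      have hcvq : jvD s a p < s * q + k := by
        have h1 : jvD s a q = s * q + avD a q := rfl
        have h2 := avD_lt (a := a) hqn
        omega
      -- jump fact, available whenever the chain does not end softly
      have hjmp : ¬ (jvD s a p < s * (q + 1)) → q + 1 < n →
          ∀ t, q < t → t < n → ∀ c : Fin (s * (n - 1) + k),
            (c : ℕ) < s * q + k → y t c = 0 := by
        intro hsoft hq1n t hqt htn c hc
        have hr : s * (q + 1) = s * q + s := by ring
        have hsq : s ≤ avD a q := by
          have h1 : jvD s a q = s * q + avD a q := rfl
          omega
        have hne : jvD s a (q + 1) ≠ jvD s a q := by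
          intro hcon
          have := hmaxq (q + 1) hq1n (by rw [hcon, hjq])
          omega
        have hjump := jv_jump ha q hq1n hsq hne
        refine ih (q + 1) (by omega) (by omega) hq1n (by simpa using hjump)
          t (by omega) htn c (by simpa using lt_of_lt_of_le hc hjump)
      -- windows above the chain kill the chain column
      have habove : ∀ t, q < t → t < n → ∀ c : Fin (s * (n - 1) + k),
          (c : ℕ) ≤ jvD s a p → y t c = 0 := by
        intro t hqt htn c hc
        by_cases hsoft : jvD s a p < s * (q + 1)
        · refine hzero t htn c (Or.inl ?_)
          have : s * (q + 1) ≤ s * t := Nat.mul_le_mul_left s (by omega)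
          omega
        · exact hjmp hsoft (by omega) t hqt htn c (by omega)
      have hout : ∀ i, i < n →
          jvD s a i ≠ ((⟨jvD s a p, hcfb⟩ : Fin (s * (n - 1) + k)) : ℕ) →
          y i (⟨jvD s a p, hcfb⟩ : Fin (s * (n - 1) + k)) = 0 := by
        intro i hin hne
        have hnev : jvD s a i ≠ jvD s a p := hne
        rcases Nat.lt_or_ge i p with hip | hip
        · refine hzero i hin _ (Or.inr ?_)
          show s * i + k ≤ jvD s a p
          have : s * i ≤ s * (p - 1) := Nat.mul_le_mul_left s (by omega)
          omega
        · rcases Nat.lt_or_ge q i with hqi | hqi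
          · exact habove i hqi hin _ (le_refl _)
          · exfalso
            apply hnev
            have h1 := jv_mono ha hip hin
            have h2 := jv_mono ha hqi hqn
            omega
      have hchain := col _ hout
      -- conclusion
      intro t hpt htn c hc
      rcases Nat.lt_or_ge q t with hqt | htq
      · exact habove t hqt htn c (by omega)
      · -- inside the chain
        have hjt : jvD s a t = jvD s a p := by
          have h1 := jv_mono ha hpt htn
          have h2 := jv_mono ha htq hqn
          omega
        rw [hchain t htn hjt, Pi.single_apply, if_neg]
        intro hcon
        rw [Fin.ext_iff] at hcon
        simp only [] at hcon
        omega
  -- Lemma U : upward resolution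
  have lemU : ∀ p (hp : p < n),
      y p = Pi.single (⟨jvD s a p, hjlt p hp⟩ : Fin (s * (n - 1) + k)) 1 := by
    intro p
    induction p using Nat.strong_induction_on with
    | _ p ihp =>
      intro hpn
      have hTne : ((Finset.range n).filter (fun t => jvD s a t = jvD s a p)).Nonempty :=
        ⟨p, Finset.mem_filter.2 ⟨Finset.mem_range.2 hpn, rfl⟩⟩
      obtain ⟨q, hqn, hjq, hpq, hmaxq⟩ :
          ∃ q, q < n ∧ jvD s a q = jvD s a p ∧ p ≤ q ∧
            (∀ t, t < n → jvD s a t = jvD s a p → t ≤ q) := by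
        refine ⟨((Finset.range n).filter (fun t => jvD s a t = jvD s a p)).max' hTne,
          ?_, ?_, ?_, ?_⟩
        · exact Finset.mem_range.1 (Finset.mem_filter.1 (Finset.max'_mem _ hTne)).1
        · exact (Finset.mem_filter.1 (Finset.max'_mem _ hTne)).2
        · exact Finset.le_max' ((Finset.range n).filter (fun t => jvD s a t = jvD s a p)) p
            (Finset.mem_filter.2 ⟨Finset.mem_range.2 hpn, rfl⟩)
        · exact fun t ht hjt =>
            Finset.le_max' ((Finset.range n).filter (fun t => jvD s a t = jvD s a p)) t
              (Finset.mem_filter.2 ⟨Finset.mem_range.2 ht, hjt⟩)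
      have hcfb : jvD s a p < s * (n - 1) + k := hjlt p hpn
      have hcvq : jvD s a p < s * q + k := by
        have h1 : jvD s a q = s * q + avD a q := rfl
        have h2 := avD_lt (a := a) hqn
        omega
      have hout : ∀ i, i < n →
          jvD s a i ≠ ((⟨jvD s a p, hcfb⟩ : Fin (s * (n - 1) + k)) : ℕ) →
          y i (⟨jvD s a p, hcfb⟩ : Fin (s * (n - 1) + k)) = 0 := by
        intro i hin hne
        have hnev : jvD s a i ≠ jvD s a p := hne
        rcases Nat.lt_or_ge i p with hip | hip
        · rw [ihp i hip hin, Pi.single_apply, if_neg]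
          intro hcon
          rw [Fin.ext_iff] at hcon
          simp only [] at hcon
          exact hnev hcon.symm
        · rcases Nat.lt_or_ge q i with hqi | hqi
          · by_cases hsoft : jvD s a p < s * (q + 1)
            · refine hzero i hin _ (Or.inl ?_)
              have : s * (q + 1) ≤ s * i := Nat.mul_le_mul_left s (by omega)
              show jvD s a p < s * i
              omega
            · have hr : s * (q + 1) = s * q + s := by ring
              have hsq : s ≤ avD a q := by
                have h1 : jvD s a q = s * q + avD a q := rfl
                omega
              have hq1n : q + 1 < n := by omega
              have hne2 : jvD s a (q + 1) ≠ jvD s a q := by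
                intro hcon
                have := hmaxq (q + 1) hq1n (by rw [hcon, hjq])
                omega
              have hjump := jv_jump ha q hq1n hsq hne2
              refine lemA n (q + 1) (by omega) (by omega) hq1n (by simpa using hjump)
                i (by omega) hin _ (by simpa using lt_of_lt_of_le hcvq hjump)
          · exfalso
            apply hnev
            have h1 := jv_mono ha hip hin
            have h2 := jv_mono ha hqi hqn
            omega
      exact col _ hout p hpn rfl
  -- conclusion
  intro p hp
  rw [lemU p hp]
  have heq : (⟨jvD s a p, hjlt p hp⟩ : Fin (s * (n - 1) + k)) = fj k s n p hp (a ⟨p, hp⟩) := by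
    apply Fin.ext
    show jvD s a p = s * p + (a ⟨p, hp⟩ : ℕ)
    simp [jvD, avD, dif_pos hp]
  rw [heq]

lemma eq_single_of_off {K : ℕ} (z : Fin K → ℝ) (e : Fin K) (hmass : ∑ c, z c = 1)
    (hoff : ∀ c, c ≠ e → z c = 0) : z = Pi.single e 1 := by
  funext c
  by_cases hc : c = e
  · subst hc
    rw [Pi.single_eq_same]
    have hsp := Finset.add_sum_erase Finset.univ z (Finset.mem_univ c)
    have hrest : ∑ c' ∈ Finset.univ.erase c, z c' = 0 :=
      Finset.sum_eq_zero fun c' hc' => hoff c' (Finset.mem_erase.1 hc').1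
    rw [hmass, hrest] at hsp
    linarith
  · rw [Pi.single_apply, if_neg hc]
    exact hoff c hc

lemma walk_extreme (hs : 0 < s) (hks : s < k) (a : Fin n → Fin k) (ha : IsWalkM k s n a) :
    vert k s n a ∈ Set.extremePoints ℝ (poolPolytope n k s) := by
  refine mem_extremePoints.2 ⟨vert_mem_pool k s n a, ?_⟩
  intro x₁ hx₁ x₂ hx₂ hseg
  obtain ⟨t1, t2, ht1, ht2, ht12, hteq⟩ := hseg
  obtain ⟨u, hu, hux⟩ := (mem_pool k s n x₁).1 hx₁
  obtain ⟨v, hv, hvx⟩ := (mem_pool k s n x₂).1 hx₂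
  have huS : ∀ i ∈ Finset.range n, u i ∈ Sgen k s n i :=
    fun i hi => hull_subset_Sgen k s n i (hu i hi)
  have hvS : ∀ i ∈ Finset.range n, v i ∈ Sgen k s n i :=
    fun i hi => hull_subset_Sgen k s n i (hv i hi)
  have hwS : ∀ i ∈ Finset.range n, (t1 • u i + t2 • v i) ∈ Sgen k s n i :=
    fun i hi => convex_Sgen k s n i (huS i hi) (hvS i hi) ht1.le ht2.le ht12
  have hwsum : ∑ i ∈ Finset.range n, (t1 • u i + t2 • v i) = vert k s n a := by
    rw [Finset.sum_add_distrib, ← Finset.smul_sum, ← Finset.smul_sum, hux, hvx, hteq]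
  have hwc := unique_decomp hs hks a ha _ hwS hwsum
  have hcomp : ∀ p (hp : p < n),
      u p = Pi.single (fj k s n p hp (a ⟨p, hp⟩)) 1 ∧
      v p = Pi.single (fj k s n p hp (a ⟨p, hp⟩)) 1 := by
    intro p hp
    have hwp := hwc p hp
    have hoffu : ∀ c, c ≠ fj k s n p hp (a ⟨p, hp⟩) → u p c = 0 ∧ v p c = 0 := by
      intro c hc
      have h0 := congrFun hwp c
      rw [Pi.add_apply, Pi.smul_apply, Pi.smul_apply, smul_eq_mul, smul_eq_mul,
        Pi.single_apply, if_neg hc] at h0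
      have hun := (huS p (Finset.mem_range.2 hp)).1 c
      have hvn := (hvS p (Finset.mem_range.2 hp)).1 c
      constructor
      · by_contra hne
        have : 0 < u p c := lt_of_le_of_ne hun (Ne.symm hne)
        nlinarith
      · by_contra hne
        have : 0 < v p c := lt_of_le_of_ne hvn (Ne.symm hne)
        nlinarith
    exact ⟨eq_single_of_off (u p) _ (huS p (Finset.mem_range.2 hp)).2.2
        (fun c hc => (hoffu c hc).1),
      eq_single_of_off (v p) _ (hvS p (Finset.mem_range.2 hp)).2.2
        (fun c hc => (hoffu c hc).2)⟩
  constructor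
  · rw [← hux, ← sum_ycan k s n a]
    refine Finset.sum_congr rfl fun i hi => ?_
    have hi' := Finset.mem_range.1 hi
    rw [(hcomp i hi').1, ycan, dif_pos hi']
  · rw [← hvx, ← sum_ycan k s n a]
    refine Finset.sum_congr rfl fun i hi => ?_
    have hi' := Finset.mem_range.1 hi
    rw [(hcomp i hi').2, ycan, dif_pos hi']

lemma vert_injOn (hs : 0 < s) (hks : s < k) {a a' : Fin n → Fin k}
    (ha : IsWalkM k s n a) (ha' : IsWalkM k s n a') (h : vert k s n a = vert k s n a') :
    a = a' := by
  have hyS : ∀ i ∈ Finset.range n, ycan k s n a' i ∈ Sgen k s n i :=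
    fun i hi => hull_subset_Sgen k s n i (ycan_mem k s n a' i hi)
  have hsum : ∑ i ∈ Finset.range n, ycan k s n a' i = vert k s n a := by
    rw [sum_ycan, h]
  have := unique_decomp hs hks a ha _ hyS hsum
  funext i
  have hin := i.2
  have h1 := this i.1 hin
  rw [ycan, dif_pos hin] at h1
  have h2 := single_injective h1
  have h3 : s * i.1 + (a' ⟨i.1, hin⟩ : ℕ) = s * i.1 + (a ⟨i.1, hin⟩ : ℕ) :=
    congrArg Fin.val h2
  have h4 : a' ⟨i.1, hin⟩ = a ⟨i.1, hin⟩ := Fin.ext (by omega)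
  have h5 : (⟨i.1, hin⟩ : Fin n) = i := Fin.ext rfl
  rw [h5] at h4
  exact h4.symm

lemma extremePoints_eq (hs : 0 < s) (hks : s < k) :
    Set.extremePoints ℝ (poolPolytope n k s)
      = (vert k s n) '' {a : Fin n → Fin k | IsWalkM k s n a} := by
  ext x
  constructor
  · intro hx
    obtain ⟨a, ha, hxa⟩ := extreme_sub k s n hks x hx
    exact ⟨a, ha, hxa.symm⟩
  · rintro ⟨a, ha, rfl⟩
    exact walk_extreme hs hks a ha

lemma numVertices_eq_card_walkSet (hs : 0 < s) (hks : s < k) :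
    Nat.card (Set.extremePoints ℝ (poolPolytope n k s)) = (walkSet k s n).card := by
  classical
  rw [extremePoints_eq hs hks]
  have hset : {a : Fin n → Fin k | IsWalkM k s n a} = ↑(walkSet k s n) := by
    ext a
    simp [mem_walkSet]
  rw [hset]
  rw [Nat.card_coe_set_eq]
  have hinj : Set.InjOn (vert k s n) ↑(walkSet k s n) := fun a ha a' ha' h =>
    vert_injOn hs hks ((mem_walkSet k s a).1 ha) ((mem_walkSet k s a').1 ha') h
  rw [Set.ncard_image_of_injOn hinj, Set.ncard_coe_finset]

end Unique


end PoolAux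

/-- the number of vertices of `P_{n,k,s}` is the sum of all entries of
`A_{k,s}^{n-1}`. -/
theorem numVertices_eq_sum_transferMatrix_pow (k s : ℕ) (hs : 0 < s) (hks : s < k) :
    ∀ n : ℕ, 0 < n →
      (numVertices n k s : ℚ) =
        ∑ a : Fin k, ∑ b : Fin k, (transferMatrix k s ^ (n - 1)) a b := by
  intro n hn
  obtain ⟨m, rfl⟩ : ∃ m, n = m + 1 := ⟨n - 1, by omega⟩
  rw [numVertices,
    PoolAux.numVertices_eq_card_walkSet (k := k) (s := s) (n := m + 1) hs hks]
  have hidx : m + 1 - 1 = m := rfl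
  rw [hidx]
  exact PoolAux.card_walkSet_eq k s m
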